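/- arXiv:0911.1271 — 2 statements merged into one kernel-verified Lean document; each statement's English description precedes it below -/
import Mathlib

section
/- Let g ≥ 1 and let n ≥ g + 1 be an integer with n ≡ g + 1 (mod 2); set m = (n − g − 1)/2 and let b₀(n) = det( c_{g+i+j−1} )_{1 ≤ i,j ≤ m} (the determinant of the empty matrix being 1). Then, as rational numbers, b₀(n) = (σ_{n,g}/σ_{g,g}) · 2^{−g}. -/
/-- Cantor's quantity `σ_{n,g}`: the product `binom(n+1,3)·binom(n+3,7)⋯
binom(n+g−1,2g−1)` when `g` is even, and `binom(n,1)·binom(n+2,5)⋯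
binom(n+g−1,2g−1)` when `g` is odd. -/
def sigmaNG (n g : ℕ) : ℕ :=
  if Even g then
    ∏ k ∈ Finset.Icc 1 (g / 2), Nat.choose (n + 2 * k - 1) (4 * k - 1)
  else
    ∏ k ∈ Finset.Icc 1 ((g + 1) / 2), Nat.choose (n + 2 * k - 2) (4 * k - 3)

/-!
The Hankel determinant `det (c_{s+i+j})_{i,j<m}` equals `∏_{1 ≤ i ≤ j < s} (i+j+2m)/(i+j)`:
by the Desnanot–Jacobi identity both sides satisfy Dodgson's condensation recurrence in `m`, and
they agree for `m = 0, 1`. On the other side `σ_{n,g+2} = σ_{n,g} · binom(n+g+1, 2g+3)`, from which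
`σ_{n+2,g} / σ_{n,g} = (n+g+1)! (n-g)! / (n! (n+1)!)` for both parities of `g`. For `n = g+1+2m`
this is the ratio of the product for `s = g+1` under `m ↦ m+1`, and `σ_{g+1,g} = 2^g σ_{g,g}`
matches its value `1` at `m = 0`.
-/

open Finset Nat

noncomputable def finSumFinTwoEquiv (n : ℕ) : Fin n ⊕ Fin 2 ≃ Fin (n + 2) :=
  Equiv.ofBijective (Sum.elim (fun i => i.castSucc.succ) ![0, Fin.last (n + 1)]) <| by
    rw [Fintype.bijective_iff_injective_and_card]
    refine ⟨?_, by simp⟩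
    rintro (i | i) (j | j) h
    · simpa [Fin.ext_iff] using h
    · fin_cases j <;> simp [Fin.ext_iff] at h; omega
    · fin_cases i <;> simp [Fin.ext_iff] at h; omega
    · fin_cases i <;> fin_cases j <;> simp_all [Fin.ext_iff]

def finSumUnitEquivSucc (n : ℕ) : Fin n ⊕ Unit ≃ Fin (n + 1) :=
  (Equiv.optionEquivSumPUnit (Fin n)).symm.trans (finSuccEquiv n).symm

def finSumUnitEquivCastSucc (n : ℕ) : Fin n ⊕ Unit ≃ Fin (n + 1) :=
  (Equiv.optionEquivSumPUnit (Fin n)).symm.trans finSuccEquivLast.symm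

namespace Matrix

theorem det_submatrix_mul_det_submatrix {R : Type*} [CommRing R] {α β : Type*} [Fintype α]
    [DecidableEq α] [Fintype β] [DecidableEq β] (e f : α ≃ β) (X Y : Matrix β β R) :
    (X.submatrix e f).det * (Y.submatrix f e).det = X.det * Y.det := by
  set σ : Equiv.Perm β := e.symm.trans f
  have hX : X.submatrix e f = (X.submatrix id σ).submatrix e e := by ext; simp [σ]
  have hY : Y.submatrix f e = (Y.submatrix σ id).submatrix e e := by ext; simp [σ]
  rw [hX, hY, det_submatrix_equiv_self, det_submatrix_equiv_self, det_permute', det_permute]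
  calc _ = ((Equiv.Perm.sign σ * Equiv.Perm.sign σ : ℤˣ) : R) * (X.det * Y.det) := by
        push_cast; ring
    _ = _ := by rw [Int.units_mul_self]; simp

def hankel {α : Type*} (a : ℕ → α) (s m : ℕ) : Matrix (Fin m) (Fin m) α :=
  of fun i j => a (i + j + s)

theorem hankel_submatrix {α : Type*} (a : ℕ → α) {s s' m m' : ℕ} (f g : Fin m → Fin m')
    (hfg : ∀ i j, (f i : ℕ) + g j + s = i + j + s') :
    (hankel a s m').submatrix f g = hankel a s' m := by
  ext i j
  simp [hankel, hfg]

variable {K : Type*} [Field K]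

theorem det_fromBlocks_submatrix_unit {ι κ : Type*} [Fintype ι] [DecidableEq ι]
    (M : Matrix ι ι K) [Invertible M] (B : Matrix ι κ K) (C : Matrix κ ι K) (D : Matrix κ κ K)
    (a b : κ) :
    (fromBlocks M (B.submatrix id fun _ : Unit => b) (C.submatrix (fun _ : Unit => a) id)
      (D.submatrix (fun _ : Unit => a) fun _ : Unit => b)).det = M.det * (D - C * ⅟M * B) a b := by
  rw [det_fromBlocks₁₁, det_unique (n := Unit)]
  simp [mul_apply]

theorem desnanot_jacobi {n : ℕ} (A : Matrix (Fin (n + 2)) (Fin (n + 2)) K)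
    (h : (A.submatrix (fun i : Fin n => i.castSucc.succ) fun i => i.castSucc.succ).det ≠ 0) :
    A.det * (A.submatrix (fun i : Fin n => i.castSucc.succ) fun i => i.castSucc.succ).det
      = (A.submatrix Fin.castSucc Fin.castSucc).det * (A.submatrix Fin.succ Fin.succ).det
        - (A.submatrix Fin.castSucc Fin.succ).det * (A.submatrix Fin.succ Fin.castSucc).det := by
  -- Each of the four minors is the interior bordered by one row and one column, so its
  -- determinant is the interior's times an entry of the 2 × 2 Schur complement `S`. The two
  -- off-diagonal minors need different row and column reindexings, whose signs cancel.
  set N := A.submatrix (finSumFinTwoEquiv n) (finSumFinTwoEquiv n)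
  have : Invertible N.toBlocks₁₁ := invertibleOfIsUnitDet _ (isUnit_iff_ne_zero.2 h)
  set S := N.toBlocks₂₂ - N.toBlocks₂₁ * ⅟N.toBlocks₁₁ * N.toBlocks₁₂
  have hA : A.det = N.toBlocks₁₁.det * S.det := by
    rw [← det_submatrix_equiv_self (finSumFinTwoEquiv n) A, ← det_fromBlocks₁₁,
      fromBlocks_toBlocks]
  have bordered (a b : Fin 2) (X : Matrix (Fin (n + 1)) (Fin (n + 1)) K)
      (e f : Fin n ⊕ Unit ≃ Fin (n + 1))
      (hX : X.submatrix e f = fromBlocks N.toBlocks₁₁ (N.toBlocks₁₂.submatrix id fun _ => b)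
        (N.toBlocks₂₁.submatrix (fun _ => a) id)
        (N.toBlocks₂₂.submatrix (fun _ => a) fun _ => b)) :
      (X.submatrix e f).det = N.toBlocks₁₁.det * S a b := by
    rw [hX, det_fromBlocks_submatrix_unit]
  have h00 := bordered 0 0 (A.submatrix Fin.castSucc Fin.castSucc) (finSumUnitEquivSucc n)
    (finSumUnitEquivSucc n) (by ext (i | i) (j | j) <;> simp [finSumUnitEquivSucc] <;> rfl)
  have h11 := bordered 1 1 (A.submatrix Fin.succ Fin.succ) (finSumUnitEquivCastSucc n)
    (finSumUnitEquivCastSucc n)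
    (by ext (i | i) (j | j) <;> simp [finSumUnitEquivCastSucc] <;> rfl)
  have h01 := bordered 0 1 (A.submatrix Fin.castSucc Fin.succ) (finSumUnitEquivSucc n)
    (finSumUnitEquivCastSucc n)
    (by ext (i | i) (j | j) <;> simp [finSumUnitEquivSucc, finSumUnitEquivCastSucc] <;> rfl)
  have h10 := bordered 1 0 (A.submatrix Fin.succ Fin.castSucc) (finSumUnitEquivCastSucc n)
    (finSumUnitEquivSucc n)
    (by ext (i | i) (j | j) <;> simp [finSumUnitEquivSucc, finSumUnitEquivCastSucc] <;> rfl)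
  rw [det_submatrix_equiv_self] at h00 h11
  rw [← det_submatrix_mul_det_submatrix (finSumUnitEquivSucc n) (finSumUnitEquivCastSucc n)
    (A.submatrix Fin.castSucc Fin.succ), h01, h10, h00, h11, hA, det_fin_two]
  change _ * N.toBlocks₁₁.det = _
  ring

theorem det_hankel_condensation (a : ℕ → K) (s n : ℕ) (h : (hankel a (s + 2) n).det ≠ 0) :
    (hankel a s (n + 2)).det * (hankel a (s + 2) n).det
      = (hankel a s (n + 1)).det * (hankel a (s + 2) (n + 1)).det
        - (hankel a (s + 1) (n + 1)).det ^ 2 := by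
  have hDJ := desnanot_jacobi (hankel a s (n + 2))
  rw [hankel_submatrix (s' := s + 2) _ _ _ fun i j => by simp; omega,
    hankel_submatrix (s' := s) _ _ _ fun i j => by simp,
    hankel_submatrix (s' := s + 2) _ _ _ fun i j => by simp; omega,
    hankel_submatrix (s' := s + 1) _ _ _ fun i j => by simp; omega,
    hankel_submatrix (s' := s + 1) _ _ _ fun i j => by simp; omega] at hDJ
  rw [hDJ h, sq]

end Matrix

def catalanHankelFactor (j m : ℕ) : ℚ := (2 * j + 2 * m)! * j ! / ((j + 2 * m)! * (2 * j)!)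

/-- `catalanHankelProd s m = ∏_{1 ≤ i ≤ j < s} (i + j + 2m) / (i + j)`, the factor for `j`
being the product over `i`. -/
def catalanHankelProd (s m : ℕ) : ℚ := ∏ j ∈ range s, catalanHankelFactor j m

theorem catalanHankelFactor_succ_right (j m : ℕ) :
    catalanHankelFactor j (m + 1) * ((j + 2 * m + 1) * (j + 2 * m + 2))
      = catalanHankelFactor j m * ((2 * j + 2 * m + 1) * (2 * j + 2 * m + 2)) := by
  unfold catalanHankelFactor
  rw [show 2 * j + 2 * (m + 1) = 2 * j + 2 * m + 1 + 1 by ring,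
    show j + 2 * (m + 1) = j + 2 * m + 1 + 1 by ring]
  push_cast [Nat.factorial_succ]
  field_simp
  ring

theorem catalanHankelFactor_succ_left (j m : ℕ) :
    catalanHankelFactor (j + 1) m * ((j + 2 * m + 1) * (2 * j + 1))
      = catalanHankelFactor j m * ((2 * j + 2 * m + 1) * (j + m + 1)) := by
  unfold catalanHankelFactor
  rw [show 2 * (j + 1) + 2 * m = 2 * j + 2 * m + 1 + 1 by ring,
    show j + 1 + 2 * m = j + 2 * m + 1 by ring, show 2 * (j + 1) = 2 * j + 1 + 1 by ring]
  push_cast [Nat.factorial_succ]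
  field_simp
  ring

theorem catalanHankelFactor_pos (j m : ℕ) : 0 < catalanHankelFactor j m := by
  unfold catalanHankelFactor; positivity

theorem catalanHankelProd_pos (s m : ℕ) : 0 < catalanHankelProd s m :=
  prod_pos fun j _ => catalanHankelFactor_pos j m

theorem catalanHankelProd_zero_right (s : ℕ) : catalanHankelProd s 0 = 1 :=
  prod_eq_one fun j _ => by
    unfold catalanHankelFactor; simp only [mul_zero, add_zero]; field_simp

theorem catalanHankelProd_succ_left (s m : ℕ) :
    catalanHankelProd (s + 1) m = catalanHankelProd s m * catalanHankelFactor s m :=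
  prod_range_succ _ _

theorem add_two_mul_catalan_succ (n : ℕ) :
    (n + 2) * catalan (n + 1) = 2 * (2 * n + 1) * catalan n := by
  refine Nat.eq_of_mul_eq_mul_left n.succ_pos ?_
  have h := Nat.succ_mul_centralBinom_succ n
  rw [← succ_mul_catalan_eq_centralBinom, ← succ_mul_catalan_eq_centralBinom] at h
  linarith

theorem catalanHankelProd_one_right (s : ℕ) : catalanHankelProd s 1 = catalan s := by
  induction s with
  | zero => simp [catalanHankelProd]
  | succ s ih =>
    have hc : ((s + 2) * catalan (s + 1) : ℚ) = 2 * (2 * s + 1) * catalan s := by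
      exact_mod_cast add_two_mul_catalan_succ s
    rw [catalanHankelProd_succ_left, ih, catalanHankelFactor,
      show 2 * s + 2 * 1 = 2 * s + 1 + 1 by ring, show s + 2 * 1 = s + 1 + 1 by ring]
    push_cast [factorial_succ]
    field_simp
    linear_combination (-(s + 1) : ℚ) * hc

theorem catalanHankelProd_succ_right (s m : ℕ) :
    catalanHankelProd s (m + 1) * ((s + 2 * m)! * (s + 2 * m + 1)!)
      = catalanHankelProd s m * ((2 * s + 2 * m)! * (2 * m + 1)!) := by
  induction s with
  | zero => simp [catalanHankelProd]
  | succ s ih =>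
    have hT := catalanHankelFactor_succ_right s m
    rw [catalanHankelProd_succ_left, catalanHankelProd_succ_left,
      show s + 1 + 2 * m = s + 2 * m + 1 by ring,
      show 2 * (s + 1) + 2 * m = 2 * s + 2 * m + 1 + 1 by ring]
    push_cast [factorial_succ] at ih ⊢
    linear_combination
      (catalanHankelFactor s (m + 1) * ((s + 2 * m + 1) * (s + 2 * m + 2))) * ih
        + (catalanHankelProd s m * ((2 * s + 2 * m)! * ((2 * m + 1) * (2 * m)!))) * hT

theorem catalanHankelProd_condensation (s m : ℕ) :
    catalanHankelProd s (m + 2) * catalanHankelProd (s + 2) m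
      = catalanHankelProd s (m + 1) * catalanHankelProd (s + 2) (m + 1)
        - catalanHankelProd (s + 1) (m + 1) ^ 2 := by
  set A := catalanHankelProd s (m + 1)
  set t₀ := catalanHankelFactor s (m + 1)
  set t₁ := catalanHankelFactor (s + 1) (m + 1)
  have h₁ : catalanHankelProd (s + 1) (m + 1) = A * t₀ := catalanHankelProd_succ_left s (m + 1)
  have h₂ : catalanHankelProd (s + 2) (m + 1) = A * t₀ * t₁ := by
    rw [catalanHankelProd_succ_left (s + 1), h₁]
  have hV₁ := catalanHankelProd_succ_right s (m + 1)
  have hV₂ := catalanHankelProd_succ_right (s + 2) m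
  have hT := catalanHankelFactor_succ_left s (m + 1)
  rw [show s + 2 * (m + 1) = s + 2 * m + 2 by ring,
    show 2 * s + 2 * (m + 1) = 2 * s + 2 * m + 2 by ring,
    show 2 * (m + 1) + 1 = 2 * m + 1 + 1 + 1 by ring, factorial_succ (2 * m + 1 + 1),
    factorial_succ (2 * m + 1)] at hV₁
  rw [show s + 2 + 2 * m = s + 2 * m + 2 by ring,
    show 2 * (s + 2) + 2 * m = 2 * s + 2 * m + 2 + 1 + 1 by ring,
    factorial_succ (2 * s + 2 * m + 2 + 1), factorial_succ (2 * s + 2 * m + 2), h₂] at hV₂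
  rw [h₁, h₂]
  push_cast at hV₁ hV₂ hT
  set X : ℚ := (((s + 2 * m + 2)! : ℕ) : ℚ)
  set Y : ℚ := (((s + 2 * m + 2 + 1)! : ℕ) : ℚ)
  set Z : ℚ := (((2 * s + 2 * m + 2)! : ℕ) : ℚ)
  set W : ℚ := (((2 * m + 1)! : ℕ) : ℚ)
  have hK : X * Y * Z * W * ((2 * s + 2 * m + 4) * (2 * s + 2 * m + 3)) ≠ 0 := by positivity
  apply mul_left_cancel₀ hK
  -- After dividing by `A² t₀ t₁`, what remains is
  -- `(2m+2)(2m+3) = (2s+2m+3)(2s+2m+4) - 2(s+2m+3)(2s+1)`, with `hT` giving `t₀ / t₁`.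
  linear_combination
    (catalanHankelProd (s + 2) m * ((2 * s + 2 * m + 4) * (2 * s + 2 * m + 3)) * Z * W) * hV₁
      - (A * Z * ((2 * m + 3) * (2 * m + 2)) * W) * hV₂ - 2 * A ^ 2 * t₀ * X * Y * Z * W * hT

theorem det_hankel_catalan (s m : ℕ) :
    (Matrix.hankel (fun k => (catalan k : ℚ)) s m).det = catalanHankelProd s m := by
  induction m using Nat.twoStepInduction generalizing s with
  | zero => simp [catalanHankelProd_zero_right]
  | one => simp [Matrix.hankel, catalanHankelProd_one_right]
  | more m ih₀ ih₁ =>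
    have hP := (catalanHankelProd_pos (s + 2) m).ne'
    have hC := Matrix.det_hankel_condensation (fun k => (catalan k : ℚ)) s m (by rwa [ih₀])
    rw [ih₀, ih₁, ih₁, ih₁, ← catalanHankelProd_condensation] at hC
    exact mul_right_cancel₀ hP hC

theorem sigmaNG_zero_right (n : ℕ) : sigmaNG n 0 = 1 := by simp [sigmaNG]

theorem sigmaNG_one_right (n : ℕ) : sigmaNG n 1 = n := by simp [sigmaNG]

theorem sigmaNG_add_two (n g : ℕ) :
    sigmaNG n (g + 2) = sigmaNG n g * (n + g + 1).choose (2 * g + 3) := by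
  rcases Nat.even_or_odd g with hg | hg
  · have hg2 : Even (g + 2) := hg.add even_two
    rw [sigmaNG, sigmaNG, if_pos hg, if_pos hg2, show (g + 2) / 2 = g / 2 + 1 by omega,
      prod_Icc_succ_top (by omega)]
    obtain ⟨k, rfl⟩ := hg
    congr 2 <;> omega
  · have hg2 : ¬Even (g + 2) := by simpa [parity_simps] using hg
    rw [sigmaNG, sigmaNG, if_neg (Nat.not_even_iff_odd.2 hg), if_neg hg2,
      show (g + 2 + 1) / 2 = (g + 1) / 2 + 1 by omega, prod_Icc_succ_top (by omega)]
    obtain ⟨k, rfl⟩ := hg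
    congr 2 <;> omega

theorem sigmaNG_pos {n g : ℕ} (h : g ≤ n) : 0 < sigmaNG n g := by
  induction g using Nat.twoStepInduction with
  | zero => simp [sigmaNG_zero_right]
  | one => rw [sigmaNG_one_right]; omega
  | more g ih _ =>
    rw [sigmaNG_add_two]
    exact Nat.mul_pos (ih (by omega)) (Nat.choose_pos (by omega))

theorem sigmaNG_add_two_left_mul {n g : ℕ} (h : g ≤ n) :
    sigmaNG (n + 2) g * (n ! * (n + 1)!) = sigmaNG n g * ((n + g + 1)! * (n - g)!) := by
  induction g using Nat.twoStepInduction generalizing n with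
  | zero => simp [sigmaNG_zero_right, mul_comm]
  | one =>
    obtain ⟨k, rfl⟩ : ∃ k, n = k + 1 := ⟨n - 1, by omega⟩
    simp only [sigmaNG_one_right, factorial_succ, show k + 1 + 1 + 1 = k + 3 by ring,
      show k + 1 - 1 = k by omega]
    ring
  | more g ih _ =>
    have c₁ := choose_mul_factorial_mul_factorial (show 2 * g + 3 ≤ n + 2 + g + 1 by omega)
    have c₂ := choose_mul_factorial_mul_factorial (show 2 * g + 3 ≤ n + g + 1 by omega)
    rw [show n + 2 + g + 1 - (2 * g + 3) = n - g by omega] at c₁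
    rw [show n + g + 1 - (2 * g + 3) = n - (g + 2) by omega] at c₂
    apply Nat.eq_of_mul_eq_mul_left (factorial_pos (2 * g + 3))
    calc (2 * g + 3)! * (sigmaNG (n + 2) (g + 2) * (n ! * (n + 1)!))
        = sigmaNG (n + 2) g * (n ! * (n + 1)!) * (n + 2 + g + 1).choose (2 * g + 3)
            * (2 * g + 3)! := by rw [sigmaNG_add_two]; ring
      _ = sigmaNG n g * (n + g + 1)! * ((n + 2 + g + 1).choose (2 * g + 3) * (2 * g + 3)!
            * (n - g)!) := by rw [ih (by omega)]; ring
      _ = sigmaNG n g * (n + g + 1).choose (2 * g + 3) * (2 * g + 3)! * (n - (g + 2))!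
            * (n + 2 + g + 1)! := by rw [c₁, ← c₂]; ring
      _ = (2 * g + 3)! * (sigmaNG n (g + 2) * ((n + (g + 2) + 1)! * (n - (g + 2))!)) := by
        rw [sigmaNG_add_two, show n + (g + 2) + 1 = n + 2 + g + 1 by ring]; ring

theorem sigmaNG_succ_self (g : ℕ) : sigmaNG (g + 1) g = 2 ^ g * sigmaNG g g := by
  induction g using Nat.twoStepInduction with
  | zero => simp [sigmaNG_zero_right]
  | one => simp [sigmaNG_one_right]
  | more g ih _ =>
    have e₁ := sigmaNG_add_two_left_mul (show g ≤ g + 1 by omega)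
    have e₀ := sigmaNG_add_two_left_mul (le_refl g)
    rw [show g + 1 + g + 1 = 2 * g + 1 + 1 by ring, show g + 1 - g = 1 by omega] at e₁
    rw [show g + g + 1 = 2 * g + 1 by ring, Nat.sub_self] at e₀
    rw [sigmaNG_add_two, sigmaNG_add_two, show g + 2 + 1 + g + 1 = (2 * g + 3) + 1 by ring,
      show g + 2 + g + 1 = 2 * g + 3 by ring, choose_succ_self_right, choose_self]
    qify at e₀ e₁ ih ⊢
    have ha : (sigmaNG (g + 1 + 2) g : ℚ)
        = sigmaNG (g + 1) g * (2 * g + 1 + 1)! / ((g + 1)! * (g + 1 + 1)!) := by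
      rw [eq_div_iff (by positivity)]; simpa using e₁
    have hc : (sigmaNG (g + 2) g : ℚ) = sigmaNG g g * (2 * g + 1)! / (g ! * (g + 1)!) := by
      rw [eq_div_iff (by positivity)]; simpa using e₀
    rw [ha, hc, ih]
    push_cast [factorial_succ]
    field_simp
    ring

theorem sigmaNG_eq_catalanHankelProd (g m : ℕ) :
    (sigmaNG (g + 1 + 2 * m) g : ℚ) = 2 ^ g * sigmaNG g g * catalanHankelProd (g + 1) m := by
  induction m with
  | zero => simp [catalanHankelProd_zero_right, sigmaNG_succ_self]
  | succ m ih =>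
    have hσ := sigmaNG_add_two_left_mul (show g ≤ g + 1 + 2 * m by omega)
    have hP := catalanHankelProd_succ_right (g + 1) m
    rw [show g + 1 + 2 * m + g + 1 = 2 * (g + 1) + 2 * m by ring,
      show g + 1 + 2 * m - g = 2 * m + 1 by omega] at hσ
    rw [show g + 1 + 2 * (m + 1) = g + 1 + 2 * m + 2 by ring]
    have hD : (((g + 1 + 2 * m)! * (g + 1 + 2 * m + 1)! : ℕ) : ℚ) ≠ 0 := by positivity
    apply mul_right_cancel₀ hD
    qify at hσ
    push_cast at hσ hD ⊢
    rw [hσ, ih]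
    linear_combination (-2 ^ g * (sigmaNG g g : ℚ)) * hP

theorem b_zero_odd_case_general
    (g n : ℕ) (hn : g + 1 ≤ n) (hpar : n % 2 = (g + 1) % 2) :
    Matrix.det (Matrix.of fun i j : Fin ((n - g - 1) / 2) =>
        (catalan (g + i + j + 1) : ℚ))
      = ((sigmaNG n g : ℚ) / (sigmaNG g g : ℚ)) / 2 ^ g := by
  obtain ⟨m, rfl⟩ : ∃ m, n = g + 1 + 2 * m := ⟨(n - g - 1) / 2, by omega⟩
  rw [show (g + 1 + 2 * m - g - 1) / 2 = m by omega]
  have hσ : (sigmaNG g g : ℚ) ≠ 0 := by exact_mod_cast (sigmaNG_pos le_rfl).ne'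
  have hH : (Matrix.of fun i j : Fin m => (catalan (g + i + j + 1) : ℚ))
      = Matrix.hankel (fun k => (catalan k : ℚ)) (g + 1) m := by
    ext i j
    simp only [Matrix.of_apply, Matrix.hankel]
    ring_nf
  rw [hH, det_hankel_catalan, sigmaNG_eq_catalanHankelProd]
  field_simp

/-- For `n ≥ g + 1`, `g ≥ 1`, with `n ≡ g + 1 (mod 2)` and `m = (n−g−1)/2`,
the Hankel determinant `b₀(n) = det(c_{g+i+j−1})_{1 ≤ i,j ≤ m}` of Catalan
numbers equals `(σ_{n,g}/σ_{g,g}) · 2^{−g}`. -/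
theorem b_zero_odd_case
    (g n : ℕ) (hg : 1 ≤ g) (hn : g + 1 ≤ n) (hpar : n % 2 = (g + 1) % 2) :
    Matrix.det (Matrix.of fun i j : Fin ((n - g - 1) / 2) =>
        (catalan (g + i + j + 1) : ℚ))
      = ((sigmaNG n g : ℚ) / (sigmaNG g g : ℚ)) / 2 ^ g :=
  b_zero_odd_case_general g n hn hpar
end

section
/- Let g ≥ 1 and n ≥ g be integers, and define the integer b₀(n) as follows: if n ≡ g (mod 2), b₀(n) = det( c_{g+i+j−2} )_{1 ≤ i,j ≤ (n−g)/2}; if n ≡ g + 1 (mod 2), b₀(n) = det( c_{g+i+j−1} )_{1 ≤ i,j ≤ (n−g−1)/2} (the determinant of the empty matrix being 1). Then b₀(n) ≠ 0, and for every prime number ℓ: if ℓ does not divide the product (n−g+1)(n−g+2)⋯(n+g−1), then ℓ does not divide b₀(n). -/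
/-!
Write `H r m = det (c (r + i + j))_{0 ≤ i, j < m}` (`catalanHankel r m` below), so that `b₀(n)`
is `H g ((n - g) / 2)` or `H (g + 1) ((n - g - 1) / 2)`. The classical evaluation
`H r m = ∏_{1 ≤ i ≤ j ≤ r - 1} (i + j + 2m) / (i + j)` shows that `b₀(n) > 0` and that every
prime dividing it divides one of the factors `i + j + 2m`, all of which lie in
`[n - g + 1, n + g - 1]`.

For `r ≤ 1` the Hankel matrix is `L Lᵀ` with `L` the unitriangular matrix of ballot numbers, so
`H r m = 1`. For larger `r`, the Desnanot–Jacobi identity gives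
`H (r+2) (m+1) · H r (m+1) = H r (m+2) · H (r+2) m + H (r+1) (m+1) ²`, which the product
formula also satisfies; since every `H r m` is positive, this recurrence determines `H`.
-/

open Finset Nat

theorem sum_range_comp_two_mul_add {M : Type*} [AddCommMonoid M] {r : ℕ} (hr : r ≤ 1)
    {f : ℕ → M} (hf : ∀ x, x % 2 ≠ r → f x = 0) (m : ℕ) :
    ∑ k ∈ range m, f (2 * k + r) = ∑ x ∈ range (2 * m), f x := by
  induction m with
  | zero => simp
  | succ m ih =>
    rw [sum_range_succ, ih, mul_add_one, sum_range_succ, sum_range_succ, add_assoc]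
    interval_cases r
    · simp [hf (2 * m + 1) (by omega)]
    · simp [hf (2 * m) (by omega)]

namespace Matrix

theorem submatrix_updateRow_of_injective {m n k l α : Type*} [DecidableEq m] [DecidableEq k]
    (A : Matrix m n α) {f : k → m} (hf : Function.Injective f) (g : l → n) (i : k)
    (v : n → α) :
    (A.updateRow (f i) v).submatrix f g = (A.submatrix f g).updateRow i (v ∘ g) := by
  ext a b
  simp [updateRow_apply, hf.eq_iff]

variable {R : Type*} [CommRing R]

theorem det_one_updateRow_updateRow {n : Type*} [Fintype n] [DecidableEq n] {i j : n}
    (hij : i ≠ j) (u v : n → R) :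
    (((1 : Matrix n n R).updateRow i u).updateRow j v).det = u i * v j - u j * v i := by
  -- The matrix is `1 + V W` with `V` of size `n × 2`, and `det (1 + V W) = det (1 + W V)`.
  let p : Fin 2 → n := ![i, j]
  have hp : Function.Injective p := by
    intro k l
    fin_cases k <;> fin_cases l <;> simp [p, hij, hij.symm]
  let V : Matrix n (Fin 2) R := (1 : Matrix n n R).submatrix id p
  let W : Matrix (Fin 2) n R := of ![u, v] - (1 : Matrix n n R).submatrix p id
  have hC : ((1 : Matrix n n R).updateRow i u).updateRow j v = 1 + V * W := by
    ext a b
    simp only [updateRow_apply, add_apply, mul_apply, Fin.sum_univ_two, V, W, p, submatrix_apply,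
      sub_apply, of_apply, one_apply]
    split_ifs <;> simp_all
  have hWV : 1 + W * V = (of ![u, v]).submatrix id p := by
    have h₁ : of ![u, v] * V = (of ![u, v]).submatrix id p := mul_submatrix_one (Equiv.refl n) p _
    have h₂ : (1 : Matrix n n R).submatrix p id * V = 1 := by
      change (1 : Matrix n n R).submatrix p (Equiv.refl n) *
        (1 : Matrix n n R).submatrix (Equiv.refl n) p = 1
      rw [submatrix_mul_equiv, Matrix.mul_one, submatrix_one p hp]
    rw [show W * V = of ![u, v] * V - (1 : Matrix n n R).submatrix p id * V from
      Matrix.sub_mul _ _ _, h₁, h₂, add_sub_cancel]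
  rw [hC, det_one_add_mul_comm, hWV, det_fin_two]
  simp [p]

theorem det_updateRow_single_self {m : ℕ} (A : Matrix (Fin (m + 1)) (Fin (m + 1)) R)
    (i : Fin (m + 1)) :
    (A.updateRow i (Pi.single i 1)).det = (A.submatrix i.succAbove i.succAbove).det := by
  rw [← adjugate_apply, adjugate_fin_succ_eq_det_submatrix, ← two_mul, pow_mul]
  simp

theorem det_updateRow_single_zero_last {m : ℕ} (A : Matrix (Fin (m + 2)) (Fin (m + 2)) R) :
    ((A.updateRow 0 (Pi.single 0 1)).updateRow (Fin.last _) (Pi.single (Fin.last _) 1)).det =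
      (A.submatrix (fun i : Fin m => i.succ.castSucc) (fun i => i.succ.castSucc)).det := by
  rw [det_updateRow_single_self, Fin.succAbove_last, ← Fin.castSucc_zero,
    submatrix_updateRow_of_injective _ (Fin.castSucc_injective _)]
  have : Pi.single (Fin.castSucc 0) (1 : R) ∘ Fin.castSucc = Pi.single (0 : Fin (m + 1)) 1 := by
    ext j
    simp [Pi.single_apply]
  rw [this, det_updateRow_single_self, submatrix_submatrix]
  rfl

/-- The Desnanot–Jacobi identity, multiplied by `det A` so that it holds over any commutative
ring. -/
theorem det_mul_desnanot_jacobi {m : ℕ} (A : Matrix (Fin (m + 2)) (Fin (m + 2)) R) :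
    A.det * ((A.submatrix Fin.succ Fin.succ).det * (A.submatrix Fin.castSucc Fin.castSucc).det -
        (A.submatrix Fin.succ Fin.castSucc).det * (A.submatrix Fin.castSucc Fin.succ).det) =
      A.det ^ 2 *
        (A.submatrix (fun i : Fin m => i.succ.castSucc) (fun i => i.succ.castSucc)).det := by
  set l := Fin.last (m + 1)
  have h0l : (0 : Fin (m + 2)) ≠ l := Fin.last_pos.ne
  have hrow (i : Fin (m + 2)) : adjugate A i ᵥ* A = A.det • Pi.single i 1 := by
    rw [← mul_apply_eq_vecMul, adjugate_mul]
    ext j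
    simp [one_apply, Pi.single_apply, eq_comm]
  -- `C A` is `A` with the rows `0` and `l` replaced by `det A` times unit vectors, while `det C`
  -- is a `2 × 2` minor of `adj A`.
  let C := ((1 : Matrix (Fin (m + 2)) (Fin (m + 2)) R).updateRow 0 (adjugate A 0)).updateRow l
    (adjugate A l)
  have hCA : C * A =
      (A.updateRow 0 (A.det • Pi.single 0 1)).updateRow l (A.det • Pi.single l 1) := by
    simp only [C, updateRow_mul, Matrix.one_mul, hrow]
  have key := congrArg det hCA
  rw [det_mul, det_one_updateRow_updateRow h0l, det_updateRow_smul, updateRow_comm _ h0l,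
    det_updateRow_smul, updateRow_comm _ h0l.symm, det_updateRow_single_zero_last] at key
  simp only [adjugate_fin_succ_eq_det_submatrix, Fin.succAbove_zero, Fin.succAbove_last, l,
    Fin.val_zero, Fin.val_last, add_zero, zero_add, pow_zero, one_mul, ← two_mul, pow_mul,
    neg_one_sq, one_pow] at key
  have hsign : (-1 : R) ^ (m + 1) * (-1) ^ (m + 1) = 1 := by
    rw [← pow_add, ← two_mul, pow_mul, neg_one_sq, one_pow]
  linear_combination key + A.det * (A.submatrix Fin.castSucc Fin.succ).det *
    (A.submatrix Fin.succ Fin.castSucc).det * hsign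

end Matrix

def hankelMatrix {R : Type*} (a : ℕ → R) (r m : ℕ) : Matrix (Fin m) (Fin m) R :=
  Matrix.of fun i j => a (r + i + j)

theorem hankelMatrix_submatrix {R : Type*} (a : ℕ → R) (r : ℕ) {k m s t : ℕ}
    {f g : Fin k → Fin m} (hf : ∀ i, (f i : ℕ) = i + s) (hg : ∀ j, (g j : ℕ) = j + t) :
    (hankelMatrix a r m).submatrix f g = hankelMatrix a (r + s + t) k := by
  ext i j
  simp only [hankelMatrix, Matrix.submatrix_apply, Matrix.of_apply, hf, hg]
  ring_nf

theorem det_hankelMatrix_desnanot_jacobi {R : Type*} [CommRing R] (a : ℕ → R) (r m : ℕ) :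
    (hankelMatrix a r (m + 2)).det *
        ((hankelMatrix a (r + 2) (m + 1)).det * (hankelMatrix a r (m + 1)).det -
          (hankelMatrix a (r + 1) (m + 1)).det ^ 2) =
      (hankelMatrix a r (m + 2)).det ^ 2 * (hankelMatrix a (r + 2) m).det := by
  have key := Matrix.det_mul_desnanot_jacobi (hankelMatrix a r (m + 2))
  rw [hankelMatrix_submatrix a r (f := Fin.succ) (g := Fin.succ) (fun _ => rfl)
      (fun _ => rfl),
    hankelMatrix_submatrix a r (f := Fin.castSucc) (g := Fin.castSucc) (s := 0) (t := 0)
      (fun _ => rfl) (fun _ => rfl),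
    hankelMatrix_submatrix a r (f := Fin.succ) (g := Fin.castSucc) (t := 0)
      (fun _ => rfl) (fun _ => rfl),
    hankelMatrix_submatrix a r (f := Fin.castSucc) (g := Fin.succ) (s := 0)
      (fun _ => rfl) (fun _ => rfl),
    hankelMatrix_submatrix a r (s := 1) (t := 1) (fun _ => rfl) (fun _ => rfl)] at key
  simpa only [add_zero, zero_add, ← sq] using key

/-- `ballot n k` counts the lattice paths of `n` steps `±1` from height `0` to height `k`
that never go below `0`. -/
def ballot : ℕ → ℕ → ℕ
  | 0, 0 => 1
  | 0, _ + 1 => 0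
  | n + 1, 0 => ballot n 1
  | n + 1, k + 1 => ballot n k + ballot n (k + 2)

theorem ballot_eq_zero_of_lt : ∀ {n k : ℕ}, n < k → ballot n k = 0
  | 0, _ + 1, _ => rfl
  | n + 1, k + 1, h => by
    rw [ballot, ballot_eq_zero_of_lt (by omega), ballot_eq_zero_of_lt (by omega)]

theorem ballot_self : ∀ n : ℕ, ballot n n = 1
  | 0 => rfl
  | n + 1 => by rw [ballot, ballot_self, ballot_eq_zero_of_lt (by omega)]

theorem ballot_eq_zero_of_odd : ∀ {n k : ℕ}, Odd (n + k) → ballot n k = 0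
  | 0, 0, h => absurd h (by decide)
  | 0, _ + 1, _ => rfl
  | n + 1, 0, h => ballot_eq_zero_of_odd (k := 1) (by simpa using h)
  | n + 1, k + 1, h => by
    rw [ballot, ballot_eq_zero_of_odd, ballot_eq_zero_of_odd] <;>
    · rw [Nat.odd_iff] at h ⊢; omega

theorem sum_ballot_succ_mul_ballot_eq {p q M : ℕ} (hp : p < M + 1) :
    ∑ k ∈ range (M + 1), ballot (p + 1) k * ballot q k =
      ∑ k ∈ range M, (ballot p k * ballot q (k + 1) + ballot q k * ballot p (k + 1)) := by
  have hlast : ∑ k ∈ range M, ballot q k * ballot p (k + 1) =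
      ∑ k ∈ range (M + 1), ballot q k * ballot p (k + 1) := by
    rw [sum_range_succ, ballot_eq_zero_of_lt (by omega : p < M + 1), mul_zero, add_zero]
  rw [sum_range_succ', sum_add_distrib]
  simp only [ballot, add_mul]
  rw [sum_add_distrib, add_assoc, hlast, sum_range_succ']
  simp only [mul_comm (ballot p _)]

theorem sum_ballot_succ_mul_ballot {p q M : ℕ} (hp : p < M + 1) (hq : q < M + 1) :
    ∑ k ∈ range (M + 1), ballot (p + 1) k * ballot q k =
      ∑ k ∈ range (M + 1), ballot p k * ballot (q + 1) k := by
  rw [sum_ballot_succ_mul_ballot_eq hp]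
  simp_rw [mul_comm (ballot p _) (ballot (q + 1) _)]
  rw [sum_ballot_succ_mul_ballot_eq hq]
  exact sum_congr rfl fun k _ => add_comm _ _

theorem sum_ballot_mul_ballot_of_add_lt : ∀ {p q M : ℕ}, p + q < M →
    ∑ k ∈ range M, ballot p k * ballot q k = ballot (p + q) 0
  | 0, q, M + 1, _ => by
    rw [sum_range_succ', sum_eq_zero fun k _ => by rw [ballot, zero_mul]]
    simp [ballot]
  | p + 1, q, M + 1, h => by
    rw [sum_ballot_succ_mul_ballot (by omega) (by omega),
      sum_ballot_mul_ballot_of_add_lt (by omega), ← add_assoc, Nat.add_right_comm p 1 q]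

theorem sum_ballot_mul_ballot {p q M : ℕ} (hp : p < M) :
    ∑ k ∈ range M, ballot p k * ballot q k = ballot (p + q) 0 := by
  have hzero : ∀ k ≥ p + 1, ballot p k * ballot q k = 0 := fun k hk => by
    rw [ballot_eq_zero_of_lt hk, zero_mul]
  rw [eventually_constant_sum hzero hp,
    ← eventually_constant_sum hzero (by omega : p + 1 ≤ p + q + 1),
    sum_ballot_mul_ballot_of_add_lt (by omega)]

/-- The reflection principle, with the subtraction moved to the other side. -/
theorem ballot_add_choose : ∀ j k : ℕ,
    ballot (2 * j + k) k + (2 * j + k).choose (j + k + 1) = (2 * j + k).choose (j + k)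
  | 0, k => by simp [ballot_self]
  | j + 1, 0 => by
    have ih := ballot_add_choose j 1
    have hsymm := choose_symm_of_eq_add (show 2 * j + 1 = j + (j + 1) by ring)
    have pascal₁ := choose_succ_succ' (2 * j + 1) (j + 1)
    have pascal₂ := choose_succ_succ' (2 * j + 1) j
    rw [show 2 * (j + 1) + 0 = 2 * j + 1 + 1 by ring, ballot]
    ring_nf at ih hsymm pascal₁ pascal₂ ⊢
    omega
  | j + 1, k + 1 => by
    have ih₁ := ballot_add_choose (j + 1) k
    have ih₂ := ballot_add_choose j (k + 2)
    have pascal₁ := choose_succ_succ' (2 * j + k + 2) (j + k + 2)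
    have pascal₂ := choose_succ_succ' (2 * j + k + 2) (j + k + 1)
    rw [show 2 * (j + 1) + (k + 1) = 2 * j + k + 2 + 1 by ring, ballot]
    ring_nf at ih₁ ih₂ pascal₁ pascal₂ ⊢
    omega
termination_by j k => 2 * j + k

theorem ballot_two_mul_zero (s : ℕ) : ballot (2 * s) 0 = catalan s := by
  have h := ballot_add_choose s 0
  simp only [add_zero] at h
  have hc := succ_mul_catalan_eq_centralBinom s
  have hsucc := choose_succ_right_eq (2 * s) s
  rw [show 2 * s - s = s by omega] at hsucc
  rw [centralBinom] at hc
  nlinarith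

def catalanHankel (r m : ℕ) : ℤ := (hankelMatrix (fun n => (catalan n : ℤ)) r m).det

theorem catalanHankel_eq_one_of_le_one {r : ℕ} (hr : r ≤ 1) (m : ℕ) :
    catalanHankel r m = 1 := by
  let L : Matrix (Fin m) (Fin m) ℤ := Matrix.of fun i k => ballot (2 * i + r) (2 * k + r)
  have hL : hankelMatrix (fun n => (catalan n : ℤ)) r m = L * L.transpose := by
    ext i j
    have hsum := sum_range_comp_two_mul_add hr
      (f := fun x => ballot (2 * i + r) x * ballot (2 * j + r) x)
      (fun x hx => by rw [ballot_eq_zero_of_odd (by rw [Nat.odd_iff]; omega), zero_mul]) m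
    rw [sum_ballot_mul_ballot (by omega),
      show 2 * i + r + (2 * j + r) = 2 * (r + i + j) by omega, ballot_two_mul_zero] at hsum
    simp only [hankelMatrix, Matrix.of_apply, Matrix.mul_apply, Matrix.transpose_apply, L]
    rw [← hsum, Fin.sum_univ_eq_sum_range
      (fun k => (ballot (2 * i + r) (2 * k + r) : ℤ) * ballot (2 * j + r) (2 * k + r))]
    push_cast
    rfl
  have hT : L.IsLowerTriangular := fun i k (hik : i < k) => by
    simp only [L, Matrix.of_apply]
    rw [ballot_eq_zero_of_lt (by omega), Nat.cast_zero]
  rw [catalanHankel, hL, Matrix.det_mul, Matrix.det_transpose,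
    Matrix.det_of_isLowerTriangular _ hT]
  simp [L, ballot_self]

/-- `∏_{1 ≤ i ≤ j ≤ k} (i + j + 2m)`, with `i` and `j` shifted to start at `0`. -/
def hankelProd (k m : ℕ) : ℕ := ∏ j ∈ range k, ∏ i ∈ range (j + 1), (i + j + 2 * m + 2)

theorem hankelProd_pos (k m : ℕ) : 0 < hankelProd k m :=
  prod_pos fun _ _ => prod_pos fun _ _ => by omega

theorem hankelProd_zero_left (m : ℕ) : hankelProd 0 m = 1 := rfl

theorem hankelProd_succ_left (k m : ℕ) :
    hankelProd (k + 1) m * (k + 2 * m + 1)! = hankelProd k m * (2 * k + 2 * m + 2)! := by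
  have hrow : ∏ i ∈ range (k + 1), (i + k + 2 * m + 2) =
      (k + 2 * m + 2).ascFactorial (k + 1) := by
    rw [ascFactorial_eq_prod_range]
    exact prod_congr rfl fun i _ => by ring
  rw [hankelProd, prod_range_succ, ← hankelProd, hrow, mul_assoc, mul_comm _ (_ !),
    factorial_mul_ascFactorial]
  ring_nf

theorem hankelProd_succ_right (k m : ℕ) :
    hankelProd k (m + 1) * ((k + 2 * m + 1)! * (k + 2 * m + 2)!) =
      hankelProd k m * ((2 * k + 2 * m + 2)! * (2 * m + 1)!) := by
  induction k with
  | zero => simp [hankelProd_zero_left, mul_comm]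
  | succ k ih =>
    have h₁ := hankelProd_succ_left k m
    have h₂ := hankelProd_succ_left k (m + 1)
    have p₁ := factorial_pos (k + 2 * m + 1)
    have p₂ := factorial_pos (k + 2 * (m + 1) + 1)
    qify at h₁ h₂ ih p₁ p₂ ⊢
    rw [← eq_div_iff p₁.ne'] at h₁
    rw [← eq_div_iff p₂.ne'] at h₂
    rw [h₁, h₂, div_mul_eq_mul_div, div_mul_eq_mul_div, div_eq_div_iff p₂.ne' p₁.ne']
    ring_nf at ih ⊢
    linear_combination ((4 + m * 2 + k * 2)! * (3 + m * 2 + k)! : ℚ) * ih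

/- The factorials' arguments are parameters so that callers can write them as `base + numeral`,
the shape that `Nat.factorial_succ` unfolds down to a common `base !`. -/
theorem cast_hankelProd_succ_left {k m : ℕ} (a b : ℕ) (ha : k + 2 * m + 1 = a := by omega)
    (hb : 2 * k + 2 * m + 2 = b := by omega) :
    (hankelProd (k + 1) m : ℚ) = hankelProd k m * b ! / a ! := by
  rw [eq_div_iff (by positivity), ← ha, ← hb]
  exact_mod_cast hankelProd_succ_left k m

theorem cast_hankelProd_succ_right {k m : ℕ} (a b c d : ℕ) (ha : k + 2 * m + 1 = a := by omega)
    (hb : k + 2 * m + 2 = b := by omega) (hc : 2 * k + 2 * m + 2 = c := by omega)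
    (hd : 2 * m + 1 = d := by omega) :
    (hankelProd k (m + 1) : ℚ) = hankelProd k m * (c ! * d !) / (a ! * b !) := by
  rw [eq_div_iff (by positivity), ← ha, ← hb, ← hc, ← hd]
  exact_mod_cast hankelProd_succ_right k m

/-- The product formula for `catalanHankel r m`. Since `r - 1` truncates, `r = 0` and `r = 1`
both give `1`. -/
noncomputable def hankelRatio (r m : ℕ) : ℚ := hankelProd (r - 1) m / hankelProd (r - 1) 0

theorem hankelRatio_pos (r m : ℕ) : 0 < hankelRatio r m := by
  have := hankelProd_pos (r - 1) m
  have := hankelProd_pos (r - 1) 0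
  unfold hankelRatio
  positivity

theorem hankelRatio_desnanot_jacobi (s m : ℕ) :
    hankelRatio (s + 2) (m + 1) * hankelRatio s (m + 1) =
      hankelRatio s (m + 2) * hankelRatio (s + 2) m + hankelRatio (s + 1) (m + 1) ^ 2 := by
  rcases s with _ | k
  · simp [hankelRatio, hankelProd]
    ring
  simp only [hankelRatio, add_tsub_cancel_right, show k + 1 + 2 - 1 = k + 1 + 1 from rfl]
  rw [cast_hankelProd_succ_left (k := k + 1) (m := m + 1) (k + 2 * m + 4) (2 * k + 2 * m + 6),
    cast_hankelProd_succ_left (k := k + 1) (m := m) (k + 2 * m + 2) (2 * k + 2 * m + 4),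
    cast_hankelProd_succ_left (k := k + 1) (m := 0) (k + 2) (2 * k + 4),
    cast_hankelProd_succ_left (k := k) (m := m + 1) (k + 2 * m + 3) (2 * k + 2 * m + 4),
    cast_hankelProd_succ_left (k := k) (m := m) (k + 2 * m + 1) (2 * k + 2 * m + 2),
    cast_hankelProd_succ_left (k := k) (m := 0) (k + 1) (2 * k + 2),
    cast_hankelProd_succ_right (k := k) (m := m + 1) (k + 2 * m + 3) (k + 2 * m + 4)
      (2 * k + 2 * m + 4) (2 * m + 3),
    cast_hankelProd_succ_right (k := k) (m := m) (k + 2 * m + 1) (k + 2 * m + 2)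
      (2 * k + 2 * m + 2) (2 * m + 1)]
  have := hankelProd_pos k m
  have := hankelProd_pos k 0
  simp only [factorial_succ]
  push_cast
  field_simp
  ring

theorem catalanHankel_eq_hankelRatio (r m : ℕ) : (catalanHankel r m : ℚ) = hankelRatio r m := by
  induction r using Nat.strong_induction_on generalizing m with
  | _ r ih =>
    rcases Nat.lt_or_ge r 2 with hr | hr
    · rw [catalanHankel_eq_one_of_le_one (by omega), hankelRatio, show r - 1 = 0 by omega,
        hankelProd_zero_left, hankelProd_zero_left, Int.cast_one, Nat.cast_one, div_one]
    obtain ⟨s, rfl⟩ : ∃ s, r = s + 2 := ⟨r - 2, by omega⟩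
    induction m with
    | zero =>
      rw [catalanHankel, Matrix.det_fin_zero, hankelRatio,
        div_self (by exact_mod_cast (hankelProd_pos _ _).ne'), Int.cast_one]
    | succ m ihm =>
      have hdj : (catalanHankel s (m + 2) : ℚ) * (catalanHankel (s + 2) (m + 1) *
          catalanHankel s (m + 1) - catalanHankel (s + 1) (m + 1) ^ 2) =
          catalanHankel s (m + 2) ^ 2 * catalanHankel (s + 2) m := by
        exact_mod_cast det_hankelMatrix_desnanot_jacobi (fun n => (catalan n : ℤ)) s m
      rw [ih s (by omega), ih s (by omega), ih (s + 1) (by omega), ihm] at hdj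
      refine mul_right_cancel₀ (hankelRatio_pos s (m + 1)).ne'
        (mul_left_cancel₀ (hankelRatio_pos s (m + 2)).ne' ?_)
      linear_combination hdj - hankelRatio s (m + 2) * hankelRatio_desnanot_jacobi s m

theorem catalanHankel_mul_hankelProd (r m : ℕ) :
    catalanHankel r m * hankelProd (r - 1) 0 = hankelProd (r - 1) m := by
  have h := catalanHankel_eq_hankelRatio r m
  rw [hankelRatio, eq_div_iff (by exact_mod_cast (hankelProd_pos _ _).ne')] at h
  exact_mod_cast h

theorem catalanHankel_ne_zero (r m : ℕ) : catalanHankel r m ≠ 0 := by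
  intro h
  have := catalanHankel_mul_hankelProd r m
  rw [h, zero_mul] at this
  exact (hankelProd_pos (r - 1) m).ne (by exact_mod_cast this)

theorem Nat.Prime.exists_mem_Icc_dvd_of_dvd_hankelProd {ℓ k m : ℕ} (hℓ : ℓ.Prime)
    (h : ℓ ∣ hankelProd k m) : ∃ t ∈ Icc (2 * m + 2) (2 * m + 2 * k), ℓ ∣ t := by
  obtain ⟨j, hj, hdvd⟩ := (Prime.dvd_finsetProd_iff hℓ.prime _).1 h
  obtain ⟨i, hi, hdvd⟩ := (Prime.dvd_finsetProd_iff hℓ.prime _).1 hdvd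
  simp only [mem_range] at hi hj
  exact ⟨_, mem_Icc.2 ⟨by omega, by omega⟩, hdvd⟩

theorem Nat.Prime.exists_mem_Icc_dvd_of_dvd_catalanHankel {ℓ r m : ℕ} (hℓ : ℓ.Prime)
    (h : (ℓ : ℤ) ∣ catalanHankel r m) :
    ∃ t ∈ Icc (2 * m + 2) (2 * m + 2 * (r - 1)), ℓ ∣ t := by
  refine hℓ.exists_mem_Icc_dvd_of_dvd_hankelProd (Int.natCast_dvd_natCast.1 ?_)
  rw [← catalanHankel_mul_hankelProd]
  exact h.mul_right _

theorem b_zero_ne_zero_and_prime_nondivisibility_general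
    (g n : ℕ) (hn : g ≤ n) :
    let b0 : ℤ :=
      if n % 2 = g % 2 then
        Matrix.det (Matrix.of fun i j : Fin ((n - g) / 2) =>
          (catalan (g + i + j) : ℤ))
      else
        Matrix.det (Matrix.of fun i j : Fin ((n - g - 1) / 2) =>
          (catalan (g + i + j + 1) : ℤ))
    b0 ≠ 0 ∧
      ∀ ℓ : ℕ, ℓ.Prime →
        ¬ ((ℓ : ℤ) ∣ ∏ t ∈ Finset.Icc (n - g + 1) (n + g - 1), (t : ℤ)) →
        ¬ ((ℓ : ℤ) ∣ b0) := by
  intro b0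
  obtain ⟨r, M, hb0, hsub⟩ : ∃ r M : ℕ, b0 = catalanHankel r M ∧
      Icc (2 * M + 2) (2 * M + 2 * (r - 1)) ⊆ Icc (n - g + 1) (n + g - 1) := by
    by_cases hpar : n % 2 = g % 2
    · refine ⟨g, (n - g) / 2, by simp only [b0, if_pos hpar]; rfl, fun t ht => ?_⟩
      simp only [mem_Icc] at ht ⊢
      omega
    · refine ⟨g + 1, (n - g - 1) / 2, ?_, fun t ht => ?_⟩
      · simp only [b0, if_neg hpar, catalanHankel, hankelMatrix]
        congr 2
        ext i j
        ring_nf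
      · simp only [mem_Icc] at ht ⊢
        omega
  refine ⟨hb0 ▸ catalanHankel_ne_zero r M, fun ℓ hℓ hprod hdvd => hprod ?_⟩
  obtain ⟨t, ht, hℓt⟩ := hℓ.exists_mem_Icc_dvd_of_dvd_catalanHankel (hb0 ▸ hdvd)
  exact (Int.natCast_dvd_natCast.2 hℓt).trans (dvd_prod_of_mem _ (hsub ht))

/-- For `n ≥ g ≥ 1`, let `b₀(n)` be the integer Hankel determinant of Catalan
numbers `det(c_{g+i+j−2})_{1 ≤ i,j ≤ (n−g)/2}` if `n ≡ g (mod 2)`, and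
`det(c_{g+i+j−1})_{1 ≤ i,j ≤ (n−g−1)/2}` otherwise. Then `b₀(n) ≠ 0`, and any
prime `ℓ` not dividing `(n−g+1)(n−g+2)⋯(n+g−1)` does not divide `b₀(n)`. -/
theorem b_zero_ne_zero_and_prime_nondivisibility
    (g n : ℕ) (hg : 1 ≤ g) (hn : g ≤ n) :
    let b0 : ℤ :=
      if n % 2 = g % 2 then
        Matrix.det (Matrix.of fun i j : Fin ((n - g) / 2) =>
          (catalan (g + i + j) : ℤ))
      else
        Matrix.det (Matrix.of fun i j : Fin ((n - g - 1) / 2) =>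
          (catalan (g + i + j + 1) : ℤ))
    b0 ≠ 0 ∧
      ∀ ℓ : ℕ, ℓ.Prime →
        ¬ ((ℓ : ℤ) ∣ ∏ t ∈ Finset.Icc (n - g + 1) (n + g - 1), (t : ℤ)) →
        ¬ ((ℓ : ℤ) ∣ b0) :=
  b_zero_ne_zero_and_prime_nondivisibility_general g n hn
end
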